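/- arXiv:2507.02769 — 3 statements merged into one kernel-verified Lean document; each statement's English description precedes it below -/
import Mathlib

section
/- Let ℓ ≥ 1 and t, z ≥ 1 be natural numbers, and set f(x) = x^(2^ℓ). For every function χ assigning to each pair (i, j) ∈ [f(t)] × [f(z)] a nonempty subset of [ℓ], there exist strictly increasing sequences 0 ≤ a₀ < a₁ < ⋯ < a_t ≤ f(t) and 0 ≤ b₀ < b₁ < ⋯ < b_z ≤ f(z) such that the block union B(p, q) := ⋃ { χ(i, j) : a_{p-1} < i ≤ a_p, b_{q-1} < j ≤ b_q } takes the same value for all (p, q) ∈ [t] × [z]. -/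
/-!
Induction on the number of colours. Removing colour `c` from every cell and applying the
induction hypothesis to the `t² × z²` array (note `(t²)^(2^k) = t^(2^(k+1))`) gives `t² × z²`
blocks whose unions all equal `S` up to `c`. If some contiguous `t × z` window of these blocks
avoids `c`, it is homogeneous with colour set `S`. Otherwise every such window meets `c`, and
grouping the blocks into `t × z` super-blocks of `t × z` blocks each makes every union `S ∪ {c}`.
-/

open Set

variable {α : Type*}

lemma Monotone.mem_Ioc_iff_exists_Ico {f : ℕ → ℕ} (hf : Monotone f) {m n i : ℕ} :
    i ∈ Ioc (f m) (f n) ↔ ∃ k ∈ Ico m n, i ∈ Ioc (f k) (f (k + 1)) := by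
  rw [← hf.biUnion_Ico_Ioc_map_succ]
  simp only [mem_iUnion, exists_prop, Order.succ_eq_add_one]

-- The paper's `B(p + 1, q + 1)`: blocks are indexed from `0`.
def blockUnion (χ : ℕ × ℕ → Set α) (a b : ℕ → ℕ) (p q : ℕ) : Set α :=
  ⋃ i ∈ Ioc (a p) (a (p + 1)), ⋃ j ∈ Ioc (b q) (b (q + 1)), χ (i, j)

namespace blockUnion

variable {χ : ℕ × ℕ → Set α} {a b : ℕ → ℕ}

lemma sdiff_singleton (c : α) (p q : ℕ) :
    blockUnion (fun x => χ x \ {c}) a b p q = blockUnion χ a b p q \ {c} := by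
  simp only [blockUnion, iUnion_sdiff]

lemma comp_eq_biUnion (ha : Monotone a) (hb : Monotone b) (g h : ℕ → ℕ) (p q : ℕ) :
    blockUnion χ (a ∘ g) (b ∘ h) p q =
      ⋃ k ∈ Ico (g p) (g (p + 1)), ⋃ l ∈ Ico (h q) (h (q + 1)), blockUnion χ a b k l := by
  ext x
  simp only [blockUnion, Function.comp, mem_iUnion, exists_prop,
    ha.mem_Ioc_iff_exists_Ico (m := g p), hb.mem_Ioc_iff_exists_Ico (m := h q)]
  constructor
  · rintro ⟨i, ⟨k, hk, hi⟩, j, ⟨l, hl, hj⟩, hx⟩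
    exact ⟨k, hk, l, hl, i, hi, j, hj, hx⟩
  · rintro ⟨k, hk, l, hl, i, hi, j, hj, hx⟩
    exact ⟨i, ⟨k, hk, hi⟩, j, ⟨l, hl, hj⟩, hx⟩

variable {t z : ℕ} {c : α} {S : Set α}

lemma eq_of_window_avoids (hS : ∀ p < t ^ 2, ∀ q < z ^ 2, blockUnion χ a b p q \ {c} = S)
    {p₀ q₀ : ℕ} (hp₀ : p₀ + t ≤ t ^ 2) (hq₀ : q₀ + z ≤ z ^ 2)
    (hc : ∀ p < t, ∀ q < z, c ∉ blockUnion χ a b (p₀ + p) (q₀ + q)) {p q : ℕ} (hp : p < t)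
    (hq : q < z) : blockUnion χ (a ∘ (p₀ + ·)) (b ∘ (q₀ + ·)) p q = S := by
  rw [← hS (p₀ + p) (by omega) (q₀ + q) (by omega), sdiff_singleton_eq_self (hc p hp q hq)]
  rfl

lemma eq_insert_of_window_meets (ha : Monotone a) (hb : Monotone b)
    (hS : ∀ p < t ^ 2, ∀ q < z ^ 2, blockUnion χ a b p q \ {c} = S)
    (hc : ∀ p₀ q₀, p₀ + t ≤ t ^ 2 → q₀ + z ≤ z ^ 2 →
      ∃ p < t, ∃ q < z, c ∈ blockUnion χ a b (p₀ + p) (q₀ + q)) {p q : ℕ} (hp : p < t)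
    (hq : q < z) : blockUnion χ (a ∘ (· * t)) (b ∘ (· * z)) p q = insert c S := by
  have hpt : p * t + t ≤ t ^ 2 := by rw [sq, ← add_one_mul]; exact Nat.mul_le_mul_right t hp
  have hqz : q * z + z ≤ z ^ 2 := by rw [sq, ← add_one_mul]; exact Nat.mul_le_mul_right z hq
  rw [comp_eq_biUnion ha hb, add_one_mul, add_one_mul]
  apply Subset.antisymm
  · simp only [iUnion_subset_iff, mem_Ico]
    intro k hk l hl
    rw [← hS k (by omega) l (by omega), insert_sdiff_singleton]
    exact subset_insert c _
  · have hblock : ∀ i < t, ∀ j < z, blockUnion χ a b (p * t + i) (q * z + j) ⊆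
        ⋃ k ∈ Ico (p * t) (p * t + t), ⋃ l ∈ Ico (q * z) (q * z + z), blockUnion χ a b k l :=
      fun i hi j hj => (subset_biUnion_of_mem (u := blockUnion χ a b (p * t + i))
        (mem_Ico.2 ⟨by omega, by omega⟩)).trans (subset_biUnion_of_mem
          (u := fun k => ⋃ l ∈ Ico (q * z) (q * z + z), blockUnion χ a b k l)
          (mem_Ico.2 ⟨by omega, by omega⟩))
    obtain ⟨i, hi, j, hj, hcij⟩ := hc (p * t) (q * z) hpt hqz
    refine insert_subset (hblock i hi j hj hcij) ?_
    rw [← hS (p * t + 0) (by omega) (q * z + 0) (by omega)]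
    exact sdiff_subset.trans (hblock 0 (by omega) 0 (by omega))

lemma exists_strictMono_eq (ha : Monotone a) (hb : Monotone b)
    (hS : ∀ p < t ^ 2, ∀ q < z ^ 2, blockUnion χ a b p q \ {c} = S) :
    ∃ g h : ℕ → ℕ, StrictMono g ∧ StrictMono h ∧ g t ≤ t ^ 2 ∧ h z ≤ z ^ 2 ∧
      ∃ T, ∀ p < t, ∀ q < z, blockUnion χ (a ∘ g) (b ∘ h) p q = T := by
  by_cases hc : ∃ p₀ q₀, p₀ + t ≤ t ^ 2 ∧ q₀ + z ≤ z ^ 2 ∧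
      ∀ p < t, ∀ q < z, c ∉ blockUnion χ a b (p₀ + p) (q₀ + q)
  · obtain ⟨p₀, q₀, hp₀, hq₀, hc⟩ := hc
    exact ⟨(p₀ + ·), (q₀ + ·), strictMono_id.const_add p₀, strictMono_id.const_add q₀, hp₀, hq₀,
      S, fun p hp q hq => eq_of_window_avoids hS hp₀ hq₀ hc hp hq⟩
  · push Not at hc
    obtain ⟨p, hp, q, hq, -⟩ := hc 0 0 (by rw [zero_add, sq]; exact t.le_mul_self)
      (by rw [zero_add, sq]; exact z.le_mul_self)
    exact ⟨(· * t), (· * z), strictMono_mul_right_of_pos (by omega),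
      strictMono_mul_right_of_pos (by omega), (sq t).ge, (sq z).ge,
      insert c S, fun p hp q hq => eq_insert_of_window_meets ha hb hS hc hp hq⟩

end blockUnion

open Finset in
theorem exists_strictMono_blockUnion_eq (s : Finset α) (t z : ℕ) (χ : ℕ × ℕ → Set α)
    (hχ : ∀ i j, 1 ≤ i → i ≤ t ^ 2 ^ #s → 1 ≤ j → j ≤ z ^ 2 ^ #s → χ (i, j) ⊆ s) :
    ∃ a b : ℕ → ℕ, StrictMono a ∧ StrictMono b ∧ a t ≤ t ^ 2 ^ #s ∧ b z ≤ z ^ 2 ^ #s ∧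
      ∃ S, ∀ p < t, ∀ q < z, blockUnion χ a b p q = S := by
  classical
  induction s using Finset.induction_on generalizing t z χ with
  | empty =>
    refine ⟨id, id, strictMono_id, strictMono_id, by simp, by simp, ∅, fun p hp q hq => ?_⟩
    simp only [blockUnion, id, iUnion_eq_empty, Set.mem_Ioc]
    intro i hi j hj
    simpa using hχ i j (by omega) (by rw [Finset.card_empty, pow_zero, pow_one]; omega) (by omega)
      (by rw [Finset.card_empty, pow_zero, pow_one]; omega)
  | insert c s hc ih =>
    have hpow (x : ℕ) : x ^ 2 ^ #(insert c s) = (x ^ 2) ^ 2 ^ #s := by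
      rw [card_insert_of_notMem hc, pow_succ', pow_mul]
    obtain ⟨a, b, ha, hb, hat, hbz, S, hS⟩ := ih (t ^ 2) (z ^ 2) (fun x => χ x \ {c})
      fun i j hi hi' hj hj' => by
        rw [sdiff_singleton_subset_iff, ← coe_insert]
        exact hχ i j hi (hpow t ▸ hi') hj (hpow z ▸ hj')
    obtain ⟨g, h, hg, hh, hgt, hhz, T, hT⟩ := blockUnion.exists_strictMono_eq ha.monotone
      hb.monotone fun p hp q hq => (blockUnion.sdiff_singleton c p q).symm.trans (hS p hp q hq)
    exact ⟨a ∘ g, b ∘ h, ha.comp hg, hb.comp hh, hpow t ▸ (ha.monotone hgt).trans hat,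
      hpow z ▸ (hb.monotone hhz).trans hbz, T, hT⟩

theorem stmt_0_general (ℓ t z : ℕ)
    (χ : ℕ × ℕ → Set ℕ)
    (hsub : ∀ i j, 1 ≤ i → i ≤ t ^ 2 ^ ℓ → 1 ≤ j → j ≤ z ^ 2 ^ ℓ →
      χ (i, j) ⊆ Set.Icc 1 ℓ) :
    ∃ a b : ℕ → ℕ,
      (∀ p, p < t → a p < a (p + 1)) ∧ (∀ q, q < z → b q < b (q + 1)) ∧
      a t ≤ t ^ 2 ^ ℓ ∧ b z ≤ z ^ 2 ^ ℓ ∧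
      ∀ p p' q q', p < t → p' < t → q < z → q' < z →
        (⋃ i ∈ Set.Ioc (a p) (a (p + 1)), ⋃ j ∈ Set.Ioc (b q) (b (q + 1)), χ (i, j)) =
        (⋃ i ∈ Set.Ioc (a p') (a (p' + 1)), ⋃ j ∈ Set.Ioc (b q') (b (q' + 1)), χ (i, j)) := by
  obtain ⟨a, b, ha, hb, hat, hbz, S, hS⟩ :=
    exists_strictMono_blockUnion_eq (Finset.Icc 1 ℓ) t z χ (by simpa using hsub)
  refine ⟨a, b, fun p _ => ha p.lt_succ_self, fun q _ => hb q.lt_succ_self, by simpa using hat,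
    by simpa using hbz, fun p p' q q' hp hp' hq hq' => ?_⟩
  exact (hS p hp q hq).trans (hS p' hp' q' hq').symm

/-- Homogenization lemma (2-dimensional combinatorial core): a brick-coloring
of an `f(t) × f(z)` array by nonempty subsets of `[ℓ]`, with `f x = x ^ 2 ^ ℓ`,
admits a `t × z` contiguous block structure on which the union-coloring is constant. -/
theorem stmt_0 (ℓ t z : ℕ) (hℓ : 1 ≤ ℓ) (ht : 1 ≤ t) (hz : 1 ≤ z)
    (χ : ℕ × ℕ → Set ℕ)
    (hne : ∀ i j, 1 ≤ i → i ≤ t ^ 2 ^ ℓ → 1 ≤ j → j ≤ z ^ 2 ^ ℓ → (χ (i, j)).Nonempty)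
    (hsub : ∀ i j, 1 ≤ i → i ≤ t ^ 2 ^ ℓ → 1 ≤ j → j ≤ z ^ 2 ^ ℓ →
      χ (i, j) ⊆ Set.Icc 1 ℓ) :
    ∃ a b : ℕ → ℕ,
      (∀ p, p < t → a p < a (p + 1)) ∧ (∀ q, q < z → b q < b (q + 1)) ∧
      a t ≤ t ^ 2 ^ ℓ ∧ b z ≤ z ^ 2 ^ ℓ ∧
      ∀ p p' q q', p < t → p' < t → q < z → q' < z →
        (⋃ i ∈ Set.Ioc (a p) (a (p + 1)), ⋃ j ∈ Set.Ioc (b q) (b (q + 1)), χ (i, j)) =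
        (⋃ i ∈ Set.Ioc (a p') (a (p' + 1)), ⋃ j ∈ Set.Ioc (b q') (b (q' + 1)), χ (i, j)) :=
  stmt_0_general ℓ t z χ hsub
end

section
/- Let ℓ ≥ 1 and t ≥ 1 be natural numbers. For every function χ assigning to each i ∈ [t^(2^ℓ)] a nonempty subset of [ℓ], there exists a strictly increasing sequence 0 ≤ a₀ < a₁ < ⋯ < a_t ≤ t^(2^ℓ) such that the interval union B(p) := ⋃ { χ(i) : a_{p-1} < i ≤ a_p } takes the same value for all p ∈ [t]. -/
/-!
Induct on the number `s` of colours available in a window of `t ^ s` consecutive cells. Either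
some sub-window of length `t ^ (s - 1)` misses one of the colours, and we recurse into it with one
colour fewer; or each of the `t` consecutive blocks of length `t ^ (s - 1)` sees every colour, and
then all their unions equal the whole palette. The theorem is the case of the palette `[ℓ]`, since
`ℓ ≤ 2 ^ ℓ`.
-/

open Set

def HasEqualUnionIntervals {α : Type*} (χ : ℕ → Set α) (t lo hi : ℕ) : Prop :=
  ∃ b : ℕ → ℕ, lo ≤ b 0 ∧ (∀ p, p < t → b p < b (p + 1)) ∧ b t ≤ hi ∧
    ∀ p p', p < t → p' < t →
      (⋃ i ∈ Ioc (b p) (b (p + 1)), χ i) = ⋃ i ∈ Ioc (b p') (b (p' + 1)), χ i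

namespace HasEqualUnionIntervals

variable {α : Type*} {χ : ℕ → Set α} {t lo hi : ℕ}

theorem mono {lo' hi' : ℕ} (h : HasEqualUnionIntervals χ t lo' hi') (hlo : lo ≤ lo')
    (hhi : hi' ≤ hi) : HasEqualUnionIntervals χ t lo hi := by
  obtain ⟨b, hb0, hmono, hbt, hunion⟩ := h
  exact ⟨b, hlo.trans hb0, hmono, hbt.trans hhi, hunion⟩

theorem of_forall_block_eq {m : ℕ} (hm : 0 < m) (U : Set α)
    (hU : ∀ p < t, ⋃ i ∈ Ioc (lo + p * m) (lo + (p + 1) * m), χ i = U) :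
    HasEqualUnionIntervals χ t lo (lo + t * m) :=
  ⟨fun p => lo + p * m, by simp,
    fun p _ => Nat.add_lt_add_left (Nat.mul_lt_mul_of_pos_right (Nat.lt_succ_self p) hm) lo,
    le_rfl, fun p p' hp hp' => (hU p hp).trans (hU p' hp').symm⟩

end HasEqualUnionIntervals

theorem hasEqualUnionIntervals_of_card_le {α : Type*} {χ : ℕ → Set α} {t : ℕ} (ht : 0 < t)
    (s : ℕ) (S : Finset α) (hS : S.card ≤ s) (lo : ℕ)
    (hne : ∀ i ∈ Ioc lo (lo + t ^ s), (χ i).Nonempty)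
    (hsub : ∀ i ∈ Ioc lo (lo + t ^ s), χ i ⊆ S) :
    HasEqualUnionIntervals χ t lo (lo + t ^ s) := by
  classical
  induction s generalizing S lo with
  | zero =>
    have hcell : lo + 1 ∈ Ioc lo (lo + t ^ 0) := by simp
    obtain ⟨x, hx⟩ := hne _ hcell
    simpa [Finset.card_eq_zero.mp (Nat.le_zero.mp hS)] using hsub _ hcell hx
  | succ s ih =>
    by_cases hmiss : ∃ lo' x, lo ≤ lo' ∧ lo' + t ^ s ≤ lo + t ^ (s + 1) ∧ x ∈ S ∧
        ∀ i ∈ Ioc lo' (lo' + t ^ s), x ∉ χ i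
    · obtain ⟨lo', x, hlo, hhi, hxS, hx⟩ := hmiss
      have hwindow : Ioc lo' (lo' + t ^ s) ⊆ Ioc lo (lo + t ^ (s + 1)) :=
        Ioc_subset_Ioc hlo hhi
      refine (ih (S.erase x) ?_ lo' (fun i hi => hne i (hwindow hi)) fun i hi y hy => ?_).mono
        hlo hhi
      · rw [Finset.card_erase_of_mem hxS]
        omega
      · rw [Finset.coe_erase]
        exact ⟨hsub i (hwindow hi) hy, fun hyx => hx i hi (hyx ▸ hy)⟩
    · push Not at hmiss
      rw [pow_succ']
      refine HasEqualUnionIntervals.of_forall_block_eq (pow_pos ht s) S fun p hp => ?_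
      have hblock : lo + (p + 1) * t ^ s = lo + p * t ^ s + t ^ s := by ring
      have hinside : lo + (p + 1) * t ^ s ≤ lo + t ^ (s + 1) := by
        rw [pow_succ']
        gcongr
        omega
      apply Subset.antisymm
      · exact iUnion₂_subset fun i hi =>
          hsub i (Ioc_subset_Ioc (Nat.le_add_right _ _) hinside hi)
      · intro x hxS
        obtain ⟨i, hi, hxi⟩ := hmiss (lo + p * t ^ s) x (by omega) (by omega) hxS
        exact mem_biUnion (hblock ▸ hi) hxi

theorem stmt_1_general (ℓ t : ℕ) (ht : 1 ≤ t)
    (χ : ℕ → Set ℕ)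
    (hne : ∀ i, 1 ≤ i → i ≤ t ^ 2 ^ ℓ → (χ i).Nonempty)
    (hsub : ∀ i, 1 ≤ i → i ≤ t ^ 2 ^ ℓ → χ i ⊆ Set.Icc 1 ℓ) :
    ∃ a : ℕ → ℕ,
      (∀ p, p < t → a p < a (p + 1)) ∧ a t ≤ t ^ 2 ^ ℓ ∧
      ∀ p p', p < t → p' < t →
        (⋃ i ∈ Set.Ioc (a p) (a (p + 1)), χ i) =
        (⋃ i ∈ Set.Ioc (a p') (a (p' + 1)), χ i) := by
  have hcard : (Finset.Icc 1 ℓ).card ≤ 2 ^ ℓ := by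
    simpa using Nat.lt_two_pow_self.le
  obtain ⟨a, -, hmono, hle, hunion⟩ :=
    hasEqualUnionIntervals_of_card_le ht (2 ^ ℓ) (Finset.Icc 1 ℓ) hcard 0
      (fun i ⟨hi₁, hi₂⟩ => hne i hi₁ (by omega))
      (fun i ⟨hi₁, hi₂⟩ => by simpa using hsub i hi₁ (by omega))
  exact ⟨a, hmono, by omega, hunion⟩

/-- Homogenization lemma (1-dimensional / ladder version): a coloring of the
`t ^ 2 ^ ℓ` cells of a sequence by nonempty subsets of `[ℓ]` admits `t`
contiguous intervals whose union-colorings all coincide. -/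
theorem stmt_1 (ℓ t : ℕ) (hℓ : 1 ≤ ℓ) (ht : 1 ≤ t)
    (χ : ℕ → Set ℕ)
    (hne : ∀ i, 1 ≤ i → i ≤ t ^ 2 ^ ℓ → (χ i).Nonempty)
    (hsub : ∀ i, 1 ≤ i → i ≤ t ^ 2 ^ ℓ → χ i ⊆ Set.Icc 1 ℓ) :
    ∃ a : ℕ → ℕ,
      (∀ p, p < t → a p < a (p + 1)) ∧ a t ≤ t ^ 2 ^ ℓ ∧
      ∀ p p', p < t → p' < t →
        (⋃ i ∈ Set.Ioc (a p) (a (p + 1)), χ i) =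
        (⋃ i ∈ Set.Ioc (a p') (a (p' + 1)), χ i) :=
  stmt_1_general ℓ t ht χ hne hsub
end

section
/- Let n ≥ 1 and let Γ be the (n × n)-grid graph with vertex set [n] × [n]. For every separation (A, B) of Γ of order < n, there exists an index i ∈ [n] and an index j ∈ [n] such that either the entire i-th row and the entire j-th column are contained in A \ B, or the entire i-th row and the entire j-th column are contained in B \ A. -/
/-!
Fewer than `n` vertices lie in `A ∩ B`, so some row and some column avoid it. The grid is the
box product of two paths, so rows and columns are images of the connected path graph; a connected
set avoiding the separator lies on one side of the separation. The row and the column meet, so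
they lie on the same side.
-/

/-- A separation of a graph `G`: `A ∪ B = V(G)` and no edge of `G` joins
`A \ B` to `B \ A`. -/
def IsSep {V : Type*} (G : SimpleGraph V) (A B : Set V) : Prop :=
  A ∪ B = Set.univ ∧ ∀ u v, G.Adj u v → ¬(u ∈ A \ B ∧ v ∈ B \ A)

/-- The order of a separation `(A, B)` is `|A ∩ B|`. -/
noncomputable def sepOrder {V : Type*} (A B : Set V) : ℕ := (A ∩ B).ncard

/-- `G[A₁] ∪ G[A₂] ∪ G[A₃] = G`: every vertex and every edge of `G` lies
inside one of the three induced subgraphs. -/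
def Covers {V : Type*} (G : SimpleGraph V) (A₁ A₂ A₃ : Set V) : Prop :=
  A₁ ∪ A₂ ∪ A₃ = Set.univ ∧
    ∀ u v, G.Adj u v →
      (u ∈ A₁ ∧ v ∈ A₁) ∨ (u ∈ A₂ ∧ v ∈ A₂) ∨ (u ∈ A₃ ∧ v ∈ A₃)

/-- A tangle of order `k` in `G`: a set of separations of order `< k` that
orients every such separation (exactly one of `(A,B)`, `(B,A)` is in `T`) and
such that no three small sides cover `G`. -/
def IsTangle {V : Type*} (G : SimpleGraph V) (k : ℕ) (T : Set (Set V × Set V)) : Prop :=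
  (∀ p ∈ T, IsSep G p.1 p.2 ∧ sepOrder p.1 p.2 < k) ∧
  (∀ A B : Set V, IsSep G A B → sepOrder A B < k → ((A, B) ∈ T ↔ (B, A) ∉ T)) ∧
  (∀ p₁ ∈ T, ∀ p₂ ∈ T, ∀ p₃ ∈ T, ¬ Covers G p₁.1 p₂.1 p₃.1)

/-- The `(n × n)`-grid graph: vertices `[n] × [n]`, edges between vertices
differing by `1` in exactly one coordinate. -/
def gridGraph (n : ℕ) : SimpleGraph (Fin n × Fin n) :=
  SimpleGraph.fromRel (fun u v =>
    (u.1 = v.1 ∧ u.2.val + 1 = v.2.val) ∨ (u.2 = v.2 ∧ u.1.val + 1 = v.1.val))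

/-- The `i`-th row of the grid. -/
def gridRow (n : ℕ) (i : Fin n) : Set (Fin n × Fin n) := {p | p.1 = i}

/-- The `j`-th column of the grid. -/
def gridCol (n : ℕ) (j : Fin n) : Set (Fin n × Fin n) := {p | p.2 = j}

open SimpleGraph

lemma Set.exists_forall_apply_ne_of_ncard_lt {α β : Type*} [Finite α] {s : Set α} (f : α → β)
    (hs : s.ncard < Nat.card β) : ∃ b, ∀ a ∈ s, f a ≠ b := by
  by_contra! h
  have hsurj : f '' s = Set.univ := Set.eq_univ_of_forall h
  have := Set.ncard_image_le (f := f) (Set.toFinite s)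
  rw [hsurj, Set.ncard_univ] at this
  omega

namespace IsSep

variable {V W : Type*} {G : SimpleGraph V} {H : SimpleGraph W} {A B : Set V}

lemma mem_right_of_notMem_left (hsep : IsSep G A B) {v : V} (hv : v ∉ A) : v ∈ B :=
  (hsep.1 ▸ Set.mem_univ v : v ∈ A ∪ B).resolve_left hv

lemma mem_left_iff_of_adj (hsep : IsSep G A B) {u v : V} (huv : G.Adj u v)
    (hu : u ∉ A ∩ B) (hv : v ∉ A ∩ B) : u ∈ A ↔ v ∈ A := by
  refine ⟨fun huA => ?_, fun hvA => ?_⟩ <;> by_contra hA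
  · exact hsep.2 u v huv
      ⟨⟨huA, fun huB => hu ⟨huA, huB⟩⟩, hsep.mem_right_of_notMem_left hA, hA⟩
  · exact hsep.2 v u huv.symm
      ⟨⟨hvA, fun hvB => hv ⟨hvA, hvB⟩⟩, hsep.mem_right_of_notMem_left hA, hA⟩

lemma range_subset_sdiff_or_of_preconnected (hsep : IsSep G A B) (f : H →g G)
    (hH : H.Preconnected) (hf : ∀ w, f w ∉ A ∩ B) :
    Set.range f ⊆ A \ B ∨ Set.range f ⊆ B \ A := by
  have hside : ∀ x y, f x ∈ A ↔ f y ∈ A := fun x y => by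
    induction (H.reachable_iff_reflTransGen x y).1 (hH x y) with
    | refl => rfl
    | tail _ hadj ih => exact ih.trans (hsep.mem_left_iff_of_adj (f.map_adj hadj) (hf _) (hf _))
  by_cases hA : ∃ x, f x ∈ A
  · obtain ⟨x, hx⟩ := hA
    left
    rintro _ ⟨y, rfl⟩
    have hy : f y ∈ A := (hside x y).1 hx
    exact ⟨hy, fun hyB => hf y ⟨hy, hyB⟩⟩
  · simp only [not_exists] at hA
    right
    rintro _ ⟨y, rfl⟩
    exact ⟨hsep.mem_right_of_notMem_left (hA y), hA y⟩

end IsSep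

lemma gridGraph_eq_boxProd (n : ℕ) : gridGraph n = pathGraph n □ pathGraph n := by
  ext u v
  simp only [gridGraph, fromRel_adj, boxProd_adj, pathGraph_adj, Fin.ext_iff, Prod.ext_iff, ne_eq]
  omega

lemma gridRow_eq_range (n : ℕ) (i : Fin n) :
    gridRow n i = Set.range (boxProdRight (pathGraph n) (pathGraph n) i) := by
  ext ⟨a, b⟩
  simp [gridRow, eq_comm]

lemma gridCol_eq_range (n : ℕ) (j : Fin n) :
    gridCol n j = Set.range (boxProdLeft (pathGraph n) (pathGraph n) j) := by
  ext ⟨a, b⟩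
  simp [gridCol, eq_comm]

theorem stmt_7_general (n : ℕ) (A B : Set (Fin n × Fin n))
    (hsep : IsSep (gridGraph n) A B) (hord : sepOrder A B < n) :
    ∃ i j : Fin n,
      (gridRow n i ⊆ A \ B ∧ gridCol n j ⊆ A \ B) ∨
      (gridRow n i ⊆ B \ A ∧ gridCol n j ⊆ B \ A) := by
  have hcard : (A ∩ B).ncard < Nat.card (Fin n) := by simpa [sepOrder] using hord
  obtain ⟨i, hi⟩ := (A ∩ B).exists_forall_apply_ne_of_ncard_lt Prod.fst hcard
  obtain ⟨j, hj⟩ := (A ∩ B).exists_forall_apply_ne_of_ncard_lt Prod.snd hcard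
  rw [gridGraph_eq_boxProd] at hsep
  have hrow := hsep.range_subset_sdiff_or_of_preconnected (boxProdRight _ _ i).toHom
    (pathGraph_preconnected n) fun b hb => hi _ hb rfl
  have hcol := hsep.range_subset_sdiff_or_of_preconnected (boxProdLeft _ _ j).toHom
    (pathGraph_preconnected n) fun a ha => hj _ ha rfl
  rw [RelEmbedding.coe_toRelHom, ← gridRow_eq_range] at hrow
  rw [RelEmbedding.coe_toRelHom, ← gridCol_eq_range] at hcol
  have hij_row : (i, j) ∈ gridRow n i := rfl
  have hij_col : (i, j) ∈ gridCol n j := rfl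
  refine ⟨i, j, ?_⟩
  rcases hrow with hr | hr <;> rcases hcol with hc | hc
  · exact Or.inl ⟨hr, hc⟩
  · exact absurd (hc hij_col).1 (hr hij_row).2
  · exact absurd (hr hij_row).1 (hc hij_col).2
  · exact Or.inr ⟨hr, hc⟩

/-- Every separation of the `(n × n)`-grid of order `< n` has a full row and a
full column entirely on one side (in `A \ B` or in `B \ A`). -/
theorem stmt_7 (n : ℕ) (hn : 1 ≤ n) (A B : Set (Fin n × Fin n))
    (hsep : IsSep (gridGraph n) A B) (hord : sepOrder A B < n) :
    ∃ i j : Fin n,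
      (gridRow n i ⊆ A \ B ∧ gridCol n j ⊆ A \ B) ∨
      (gridRow n i ⊆ B \ A ∧ gridCol n j ⊆ B \ A) :=
  stmt_7_general n A B hsep hord
end
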